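/- Under the genericity assumptions, for every i = 0, 1, …, g the points V_i and V_i′ lie on the tropical curve Γ̃; that is, F is not differentiable at any of the 2g+2 points V_0,…,V_g, V_0′,…,V_g′. -/

import Mathlib

/-- The tropical polynomial
`F(X,Y) = min(2Y, Y + min((g+1)X, C_g + gX, …, C_1 + X, C_0), C_{-1})`. -/
noncomputable def tropF (g : ℕ) (Cm1 : ℝ) (C : ℕ → ℝ) (P : ℝ × ℝ) : ℝ :=
  min (2 * P.2)
    (min
      (P.2 + min (((g : ℝ) + 1) * P.1)
        ((Finset.range (g + 1)).inf' ⟨0, Finset.mem_range.mpr (Nat.succ_pos g)⟩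
          (fun i => C i + (i : ℝ) * P.1)))
      Cm1)

/-! With the convention `C_{g+1} = 0`, the genericity assumptions say that `k ↦ C_k` is convex
on `0, …, g+1`. Hence on the vertical line `X = C_j - C_{j+1}` the term `C_j + jX` is the
smallest of the inner minimum, and `F(X, ·)` is the one-variable function
`Y ↦ min(2Y, Y + c, C_{-1})` with `c = C_j + jX` and `2c ≤ 2C_0 < C_{-1}`. Its slope drops from
`2` to `1` at `Y = c` and from `1` to `0` at `Y = C_{-1} - c`; these two kinks are `V'_{g-j}`
and `V_{g-j}`, and a kink of a slice is a point of non-differentiability of `F`. -/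

open Set Filter Topology

section DiscreteConvexity

variable {f : ℕ → ℝ} {n : ℕ}

lemma monotoneOn_sub_of_two_mul_le_add
    (hf : ∀ k, k + 2 ≤ n → 2 * f (k + 1) ≤ f k + f (k + 2)) :
    MonotoneOn (fun k => f (k + 1) - f k) (Iio n) :=
  monotoneOn_of_le_succ ordConnected_Iio fun k _ _ hk => by
    simp only [Order.succ_eq_add_one, mem_Iio] at hk ⊢
    linarith [hf k (by omega)]

lemma add_mul_le_of_two_mul_le_add
    (hf : ∀ k, k + 2 ≤ n → 2 * f (k + 1) ≤ f k + f (k + 2)) {j k : ℕ} (hj : j < n) (hk : k ≤ n) :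
    f j + j * (f j - f (j + 1)) ≤ f k + k * (f j - f (j + 1)) := by
  have hΔ := monotoneOn_sub_of_two_mul_le_add hf
  set h : ℕ → ℝ := fun m => f m + m * (f j - f (j + 1)) with h_def
  have h_succ (m : ℕ) : h (m + 1) - h m = (f (m + 1) - f m) - (f (j + 1) - f j) := by
    simp only [h_def]; push_cast; ring
  have h_anti : AntitoneOn h (Iic j) :=
    antitoneOn_of_succ_le ordConnected_Iic fun m _ _ hm => by
      simp only [Order.succ_eq_add_one, mem_Iic] at hm ⊢
      linarith [h_succ m, hΔ (show m < n by omega) hj (by omega)]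
  have h_mono : MonotoneOn h (Icc j n) :=
    monotoneOn_of_le_succ ordConnected_Icc fun m _ hm hm' => by
      simp only [Order.succ_eq_add_one, mem_Icc] at hm hm' ⊢
      linarith [h_succ m, hΔ hj (show m < n by omega) hm.1]
  rcases le_total k j with hkj | hjk
  · exact h_anti (mem_Iic.2 hkj) (mem_Iic.2 le_rfl) hkj
  · exact h_mono ⟨le_rfl, hj.le⟩ ⟨hjk, hk⟩ hjk

end DiscreteConvexity

lemma not_differentiableAt_of_eventuallyEq_Iic_Ici {f ℓ r : ℝ → ℝ} {x a b : ℝ}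
    (hℓ : HasDerivAt ℓ a x) (hr : HasDerivAt r b x)
    (hfℓ : f =ᶠ[𝓝[≤] x] ℓ) (hfr : f =ᶠ[𝓝[≥] x] r) (hab : a ≠ b) :
    ¬ DifferentiableAt ℝ f x := by
  intro hf
  have ha : deriv f x = a :=
    (uniqueDiffOn_Iic x x self_mem_Iic).eq_deriv _ hf.hasDerivAt.hasDerivWithinAt <|
      hℓ.hasDerivWithinAt.congr_of_eventuallyEq hfℓ (hfℓ.eq_of_nhdsWithin self_mem_Iic)
  have hb : deriv f x = b :=
    (uniqueDiffOn_Ici x x self_mem_Ici).eq_deriv _ hf.hasDerivAt.hasDerivWithinAt <|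
      hr.hasDerivWithinAt.congr_of_eventuallyEq hfr (hfr.eq_of_nhdsWithin self_mem_Ici)
  exact hab (ha.symm.trans hb)

section Kinks

variable {c d : ℝ}

lemma not_differentiableAt_min_two_mul_min_add_of_eq (h : 2 * c < d) :
    ¬ DifferentiableAt ℝ (fun y => min (2 * y) (min (y + c) d)) c := by
  have near : ∀ᶠ y in 𝓝 c, y < d - c := eventually_lt_nhds (by linarith)
  refine not_differentiableAt_of_eventuallyEq_Iic_Ici (ℓ := fun y => 2 * y) (r := fun y => y + c)
    ((hasDerivAt_id c).const_mul 2) ((hasDerivAt_id c).add_const c) ?_ ?_ (by norm_num)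
  · filter_upwards [self_mem_nhdsWithin, nhdsWithin_le_nhds near] with y (hy : y ≤ c) hyd
    exact min_eq_left (le_min (by linarith) (by linarith))
  · filter_upwards [self_mem_nhdsWithin, nhdsWithin_le_nhds near] with y (hy : c ≤ y) hyd
    rw [min_eq_left (by linarith : y + c ≤ d)]
    exact min_eq_right (by linarith)

lemma not_differentiableAt_min_two_mul_min_add_of_add_eq (h : 2 * c < d) :
    ¬ DifferentiableAt ℝ (fun y => min (2 * y) (min (y + c) d)) (d - c) := by
  have near : ∀ᶠ y in 𝓝 (d - c), c < y := eventually_gt_nhds (by linarith)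
  refine not_differentiableAt_of_eventuallyEq_Iic_Ici (ℓ := fun y => y + c) (r := fun _ => d)
    ((hasDerivAt_id _).add_const c) (hasDerivAt_const _ d) ?_ ?_ one_ne_zero
  · filter_upwards [self_mem_nhdsWithin, nhdsWithin_le_nhds near] with y (hy : y ≤ d - c) hyc
    rw [min_eq_left (by linarith : y + c ≤ d)]
    exact min_eq_right (by linarith)
  · filter_upwards [self_mem_nhdsWithin, nhdsWithin_le_nhds near] with y (hy : d - c ≤ y) hyc
    rw [min_eq_right (by linarith : d ≤ y + c)]
    exact min_eq_right (by linarith)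

end Kinks

lemma tropF_apply_slope {g : ℕ} {Cm1 : ℝ} {C : ℕ → ℝ} (hC : C (g + 1) = 0)
    (hconv : ∀ k, k + 2 ≤ g + 1 → 2 * C (k + 1) ≤ C k + C (k + 2)) {j : ℕ} (hj : j ≤ g)
    (y : ℝ) :
    tropF g Cm1 C (C j - C (j + 1), y) =
      min (2 * y) (min (y + (C j + j * (C j - C (j + 1)))) Cm1) := by
  have hmin := fun {k} => add_mul_le_of_two_mul_le_add hconv (Nat.lt_succ_of_le hj) (k := k)
  unfold tropF
  congr 3
  refine le_antisymm (min_le_of_right_le (Finset.inf'_le _ (by simpa using Nat.lt_succ_of_le hj)))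
    (le_min ?_ (Finset.le_inf' _ _ fun k hk => hmin (by simp at hk; omega)))
  simpa [hC] using hmin le_rfl

lemma DifferentiableAt.comp_slice {F : ℝ × ℝ → ℝ} {x y : ℝ} (hF : DifferentiableAt ℝ F (x, y)) :
    DifferentiableAt ℝ (fun y => F (x, y)) y :=
  hF.comp y ((differentiableAt_const x).prodMk differentiableAt_id)

theorem tropF_vertices_on_curve_general (g : ℕ) (Cm1 : ℝ) (C : ℕ → ℝ)
    (hCtop : C (g + 1) = 0)
    (h1 : Cm1 > 2 * C 0) (h2 : C (g - 1) > 2 * C g)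
    (h3 : ∀ i, i + 2 ≤ g → C i + C (i + 2) > 2 * C (i + 1)) :
    ∀ i ≤ g,
      ¬ DifferentiableAt ℝ (tropF g Cm1 C)
        (C (g - i) - C (g - i + 1),
          Cm1 - ((g - i + 1 : ℕ) : ℝ) * C (g - i) + ((g - i : ℕ) : ℝ) * C (g - i + 1)) ∧
      ¬ DifferentiableAt ℝ (tropF g Cm1 C)
        (C (g - i) - C (g - i + 1),
          ((g - i + 1 : ℕ) : ℝ) * C (g - i) - ((g - i : ℕ) : ℝ) * C (g - i + 1)) := by
  have hconv : ∀ k, k + 2 ≤ g + 1 → 2 * C (k + 1) ≤ C k + C (k + 2) := by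
    intro k hk
    rcases Nat.lt_or_ge (k + 2) (g + 1) with hlt | hge
    · exact (h3 k (by omega)).le
    · obtain rfl : g = k + 1 := by omega
      rw [show k + 1 + 1 = k + 2 from rfl] at hCtop
      rw [Nat.add_sub_cancel] at h2
      linarith
  intro i _
  have hj : g - i ≤ g := Nat.sub_le g i
  generalize g - i = j at hj ⊢
  have hc0 : C j + j * (C j - C (j + 1)) ≤ C 0 := by
    simpa using add_mul_le_of_two_mul_le_add hconv (Nat.lt_succ_of_le hj) (Nat.zero_le _)
  have hcd : 2 * (C j + j * (C j - C (j + 1))) < Cm1 := by linarith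
  have hslice := funext (tropF_apply_slope (Cm1 := Cm1) hCtop hconv hj)
  constructor
  · intro hF
    apply not_differentiableAt_min_two_mul_min_add_of_add_eq hcd
    rw [← hslice]
    convert hF.comp_slice using 2
    push_cast; ring
  · intro hF
    apply not_differentiableAt_min_two_mul_min_add_of_eq hcd
    rw [← hslice]
    convert hF.comp_slice using 2
    push_cast; ring

/-- Under the genericity assumptions, all `2g+2` vertices
`V_i = (C_{g-i} - C_{g-i+1}, C_{-1} - (g-i+1)C_{g-i} + (g-i)C_{g-i+1})` and
`V_i' = (C_{g-i} - C_{g-i+1}, (g-i+1)C_{g-i} - (g-i)C_{g-i+1})`, `i = 0, …, g`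
(with the convention `C_{g+1} = 0`), lie on the tropical curve `Γ̃`, i.e. `F`
is not differentiable at any of them. -/
theorem tropF_vertices_on_curve (g : ℕ) (hg : 1 ≤ g) (Cm1 : ℝ) (C : ℕ → ℝ)
    (hCtop : C (g + 1) = 0)
    (h1 : Cm1 > 2 * C 0) (h2 : C (g - 1) > 2 * C g)
    (h3 : ∀ i, i + 2 ≤ g → C i + C (i + 2) > 2 * C (i + 1)) :
    ∀ i ≤ g,
      ¬ DifferentiableAt ℝ (tropF g Cm1 C)
        (C (g - i) - C (g - i + 1),
          Cm1 - ((g - i + 1 : ℕ) : ℝ) * C (g - i) + ((g - i : ℕ) : ℝ) * C (g - i + 1)) ∧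
      ¬ DifferentiableAt ℝ (tropF g Cm1 C)
        (C (g - i) - C (g - i + 1),
          ((g - i + 1 : ℕ) : ℝ) * C (g - i) - ((g - i : ℕ) : ℝ) * C (g - i + 1)) :=
  tropF_vertices_on_curve_general g Cm1 C hCtop h1 h2 h3
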